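/- The duplicate-elimination rule is sound and complete: for a finite family of spheres indexed by a linearly ordered type, define Process(i, j) to hold iff ‖c_i − c_j‖ ≤ r_i + r_j and ‖c_i − c_j‖ ≤ 2·r_j and (j > i or ‖c_i − c_j‖ > 2·r_i). Then for every colliding pair i ≠ j, exactly one of Process(i, j) and Process(j, i) holds. -/
import Mathlib


theorem duplicate_elimination_exactly_one
    (c : ℕ → EuclideanSpace ℝ (Fin 3)) (r : ℕ → ℝ)
    (hr : ∀ k, 0 < r k) (i j : ℕ) (hne : i ≠ j)
    (hcol : ‖c i - c j‖ ≤ r i + r j) :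
    Xor'
      (‖c i - c j‖ ≤ r i + r j ∧ ‖c i - c j‖ ≤ 2 * r j ∧
        (j > i ∨ ‖c i - c j‖ > 2 * r i))
      (‖c j - c i‖ ≤ r j + r i ∧ ‖c j - c i‖ ≤ 2 * r i ∧
        (i > j ∨ ‖c j - c i‖ > 2 * r j)) := by
  have hrev : ‖c j - c i‖ = ‖c i - c j‖ := norm_sub_rev _ _
  set d := ‖c i - c j‖ with hd
  rw [hrev]
  have hcol' : d ≤ r j + r i := by linarith
  rcases lt_or_gt_of_ne hne with hij | hij
  · rcases le_or_gt d (2 * r j) with h | h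
    · exact Or.inl ⟨⟨hcol, h, Or.inl hij⟩,
        fun ⟨_, _, hq⟩ => by rcases hq with h' | h' <;> [omega; linarith]⟩
    · exact Or.inr ⟨⟨hcol', by linarith, Or.inr h⟩, fun ⟨_, h2, _⟩ => by linarith⟩
  · rcases le_or_gt d (2 * r i) with h | h
    · exact Or.inr ⟨⟨hcol', h, Or.inl hij⟩,
        fun ⟨_, _, hq⟩ => by rcases hq with h' | h' <;> [omega; linarith]⟩
    · exact Or.inl ⟨⟨hcol, by linarith, Or.inr h⟩, fun ⟨_, h2, _⟩ => by linarith⟩
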